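/- If P : ℝ≥0 × ℝ≥0 → Fin r → Fin r → ℝ satisfies the Kolmogorov forward equations with nonnegative rates τ_{kj}(t) and initial condition P_{ij}(s,s) = if i=j then 1 else 0, then P_{ij}(s,t) ≥ 0 for all t ≥ s. -/

import Mathlib

open scoped BigOperators

open Set Filter Topology

/-- Kolmogorov forward equations: transition probabilities remain nonnegative
forward in time. -/
theorem kolmogorov_nonneg
    {r : ℕ} (P : ℝ → ℝ → Fin r → Fin r → ℝ)
    (τ : ℝ → Fin r → Fin r → ℝ) (c : ℝ → Fin r → ℝ)
    (hτcont : ∀ k j : Fin r, Continuous fun t => τ t k j)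
    (hτnonneg : ∀ (t : ℝ) (k j : Fin r), 0 ≤ τ t k j)
    (hτdiag : ∀ (t : ℝ) (j : Fin r), τ t j j = 0)
    (hc : ∀ (t : ℝ) (j : Fin r), c t j = ∑ k : Fin r, τ t j k)
    (s : ℝ) (hs : 0 ≤ s)
    (hode : ∀ (i j : Fin r) (t : ℝ), s ≤ t →
      HasDerivAt (fun u => P s u i j)
        (-(c t j) * P s t i j + ∑ k : Fin r, P s t i k * τ t k j) t)
    (hinit : ∀ i j : Fin r, P s s i j = if i = j then (1 : ℝ) else 0) :
    ∀ t : ℝ, s ≤ t → ∀ i j : Fin r, 0 ≤ P s t i j := by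
  intro T hT i j
  classical
  -- a bound K on the total rates over [s, T]
  obtain ⟨t₀, ht₀, hmax⟩ : ∃ t₀ ∈ Icc s T, ∀ u ∈ Icc s T,
      (∑ a : Fin r, ∑ b : Fin r, τ u a b) ≤ ∑ a : Fin r, ∑ b : Fin r, τ t₀ a b := by
    obtain ⟨t₀, ht₀, hmax⟩ := isCompact_Icc.exists_isMaxOn ⟨s, le_refl s, hT⟩
      ((continuous_finset_sum _ fun a _ =>
        continuous_finset_sum _ fun b _ => hτcont a b).continuousOn (s := Icc s T))
    exact ⟨t₀, ht₀, fun u hu => hmax hu⟩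
  set K : ℝ := max 0 (∑ a : Fin r, ∑ b : Fin r, τ t₀ a b) with hK
  have hK0 : 0 ≤ K := le_max_left _ _
  have hKτ : ∀ u ∈ Icc s T, ∀ m : Fin r, (∑ k : Fin r, τ u k m) ≤ K := by
    intro u hu m
    refine le_trans ?_ ((hmax u hu).trans (le_max_right _ _))
    exact Finset.sum_le_sum fun a _ =>
      Finset.single_le_sum (fun b _ => hτnonneg u a b) (Finset.mem_univ m)
  have hcnonneg : ∀ u (m : Fin r), 0 ≤ c u m := fun u m => by
    rw [hc]; exact Finset.sum_nonneg fun b _ => hτnonneg u m b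
  -- the auxiliary family and its pointwise sup
  set g : Option (Fin r) → ℝ → ℝ := fun o u => o.elim 0 (fun k => -P s u i k) with hg
  have hne : (Finset.univ : Finset (Option (Fin r))).Nonempty :=
    ⟨none, Finset.mem_univ none⟩
  set f : ℝ → ℝ := fun u => Finset.univ.sup' hne (fun o => g o u) with hf
  have hg_le : ∀ u (o : Option (Fin r)), g o u ≤ f u := fun u o =>
    Finset.le_sup' (fun o => g o u) (Finset.mem_univ o)
  have hf0 : ∀ u, 0 ≤ f u := fun u => hg_le u none
  have hgc : ∀ (o : Option (Fin r)) (u : ℝ), s ≤ u → ContinuousAt (g o) u := by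
    rintro (_ | k) u hu
    · exact continuousAt_const
    · exact ((hode i k u hu).neg).continuousAt
  have hfc : ∀ u : ℝ, s ≤ u → ContinuousAt f u := fun u hu =>
    ContinuousAt.finset_sup'_apply hne fun o _ => hgc o u hu
  -- Grönwall
  have hgron : ∀ x ∈ Icc s T, f x ≤ gronwallBound 0 K 0 (x - s) := by
    apply le_gronwallBound_of_liminf_deriv_right_le (f' := fun u => K * f u)
    · exact fun u hu => (hfc u hu.1).continuousWithinAt
    · intro x hx rr hrr
      have hrr0 : 0 < rr := lt_of_le_of_lt (mul_nonneg hK0 (hf0 x)) hrr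
      -- pick a branch that achieves the sup frequently to the right of x
      obtain ⟨o, ho⟩ : ∃ o : Option (Fin r), ∃ᶠ z in 𝓝[>] x, f z = g o z := by
        by_contra h
        push_neg at h
        have h' : ∀ o : Option (Fin r), ∀ᶠ z in 𝓝[>] x, f z ≠ g o z := fun o =>
          (h o)
        have : ∀ᶠ z in 𝓝[>] x, ∀ o : Option (Fin r), f z ≠ g o z :=
          eventually_all.mpr h'
        obtain ⟨z, hz⟩ := this.exists
        obtain ⟨o, -, ho⟩ := Finset.exists_mem_eq_sup' hne (fun o => g o z)
        exact hz o ho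
      have hftend : Tendsto f (𝓝[>] x) (𝓝 (f x)) :=
        ((hfc x hx.1).tendsto).mono_left nhdsWithin_le_nhds
      have hgtend : Tendsto (g o) (𝓝[>] x) (𝓝 (g o x)) :=
        ((hgc o x hx.1).tendsto).mono_left nhdsWithin_le_nhds
      have hox : f x = g o x :=
        tendsto_nhds_unique_of_frequently_eq hftend hgtend ho
      rcases o with _ | k
      · -- the sup is 0 frequently; slopes are 0 < rr
        have hfx : f x = 0 := hox
        refine ho.mono fun z hz => ?_
        rw [hz, hfx]
        simpa [hg] using hrr0
      · -- the sup is −P_{ik} frequently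
        have hPk : P s x i k = -f x := by
          have : f x = -P s x i k := hox
          linarith
        have hderiv : HasDerivAt (fun u => -P s u i k)
            (-(-(c x k) * P s x i k + ∑ m : Fin r, P s x i m * τ x m k)) x :=
          (hode i k x hx.1).neg
        set D : ℝ := -(-(c x k) * P s x i k + ∑ m : Fin r, P s x i m * τ x m k)
          with hD
        have hDle : D ≤ K * f x := by
          have h1 : c x k * P s x i k ≤ 0 := by
            rw [hPk]
            exact mul_nonpos_of_nonneg_of_nonpos (hcnonneg x k) (by linarith [hf0 x])
          have h2 : ∀ m : Fin r, -P s x i m * τ x m k ≤ f x * τ x m k := fun m =>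
            mul_le_mul_of_nonneg_right (hg_le x (some m)) (hτnonneg x m k)
          have h3 : (∑ m : Fin r, -P s x i m * τ x m k) ≤ f x * ∑ m : Fin r, τ x m k := by
            rw [Finset.mul_sum]
            exact Finset.sum_le_sum fun m _ => h2 m
          have h4 : f x * (∑ m : Fin r, τ x m k) ≤ f x * K :=
            mul_le_mul_of_nonneg_left (hKτ x (⟨hx.1, le_of_lt hx.2⟩) k) (hf0 x)
          have : D = c x k * P s x i k + ∑ m : Fin r, -P s x i m * τ x m k := by
            rw [hD, neg_add]
            congr 1
            · ring
            · rw [← Finset.sum_neg_distrib]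
              exact Finset.sum_congr rfl fun m _ => by ring
          rw [this]
          calc c x k * P s x i k + ∑ m : Fin r, -P s x i m * τ x m k
              ≤ 0 + f x * K := by
                have := h3.trans h4
                gcongr
            _ = K * f x := by ring
        have hslope : Tendsto (fun z => (z - x)⁻¹ * ((-P s z i k) - (-P s x i k)))
            (𝓝[>] x) (𝓝 D) := by
          have := (hasDerivAt_iff_tendsto_slope).mp hderiv
          have h5 : 𝓝[>] x ≤ 𝓝[≠] x :=
            nhdsWithin_mono x fun z hz => ne_of_gt hz
          exact (this.mono_left h5).congr fun z => by
            simp [slope_def_field, div_eq_inv_mul]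
        have hev : ∀ᶠ z in 𝓝[>] x,
            (z - x)⁻¹ * ((-P s z i k) - (-P s x i k)) < rr :=
          hslope.eventually_lt_const (lt_of_le_of_lt hDle hrr)
        refine (ho.and_eventually hev).mono ?_
        rintro z ⟨hz1, hz2⟩
        have : f z - f x = (-P s z i k) - (-P s x i k) := by
          rw [hz1, hox]; rfl
        rw [this]
        exact hz2
    · -- f s ≤ 0
      apply Finset.sup'_le
      rintro (_ | k) -
      · exact le_refl 0
      · simp only [hg, Option.elim]
        rw [hinit i k]
        split <;> norm_num
    · intro x _
      simp
  -- conclude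
  have hfT : f T ≤ 0 := by
    have := hgron T ⟨hT, le_refl T⟩
    rwa [gronwallBound_ε0_δ0] at this
  have := hg_le T (some j)
  simp only [hg, Option.elim] at this
  linarith
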